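/- (Robbins–Siegmund, deterministic form) Let (X_n), (a_n), (r_n) be nonnegative real sequences with X_{n+1} ≤ (1 − a_n) X_n + r_n for all n, where 0 ≤ a_n ≤ 1, Σ a_n = ∞, and Σ r_n < ∞. Then X_n → 0. -/
import Mathlib


/-- Deterministic Robbins–Siegmund: if `X_{n+1} ≤ (1 - a_n) X_n + r_n` with
`a_n ∈ [0,1]`, `Σ a_n = ∞`, `Σ r_n < ∞`, then `X_n → 0`. -/
theorem robbins_siegmund_deterministic (X a r : ℕ → ℝ)
    (hX : ∀ n, 0 ≤ X n) (ha0 : ∀ n, 0 ≤ a n) (ha1 : ∀ n, a n ≤ 1)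
    (hr : ∀ n, 0 ≤ r n)
    (hrec : ∀ n, X (n + 1) ≤ (1 - a n) * X n + r n)
    (hadiv : Filter.Tendsto (fun n => ∑ k ∈ Finset.range n, a k) Filter.atTop Filter.atTop)
    (hrsum : Summable r) :
    Filter.Tendsto X Filter.atTop (nhds 0) := by
  -- Key unrolled estimate
  have key : ∀ m n, m ≤ n →
      X n ≤ (∏ k ∈ Finset.Ico m n, (1 - a k)) * X m + ∑ k ∈ Finset.Ico m n, r k := by
    intro m n hmn
    induction n, hmn using Nat.le_induction with
    | base => simp
    | succ n hmn ih =>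
      have h1 : (0:ℝ) ≤ 1 - a n := by linarith [ha1 n]
      have hsum_nonneg : (0:ℝ) ≤ ∑ k ∈ Finset.Ico m n, r k :=
        Finset.sum_nonneg fun k _ => hr k
      calc X (n+1) ≤ (1 - a n) * X n + r n := hrec n
        _ ≤ (1 - a n) * ((∏ k ∈ Finset.Ico m n, (1 - a k)) * X m
              + ∑ k ∈ Finset.Ico m n, r k) + r n := by
            have := mul_le_mul_of_nonneg_left ih h1
            linarith
        _ ≤ (∏ k ∈ Finset.Ico m (n+1), (1 - a k)) * X m
              + ∑ k ∈ Finset.Ico m (n+1), r k := by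
            rw [Finset.prod_Ico_succ_top hmn, Finset.sum_Ico_succ_top hmn]
            have hle : (1 - a n) * (∑ k ∈ Finset.Ico m n, r k)
                ≤ ∑ k ∈ Finset.Ico m n, r k := by
              nlinarith [ha0 n]
            nlinarith
  -- Product bound via exp
  have prod_le : ∀ m n, (∏ k ∈ Finset.Ico m n, (1 - a k))
      ≤ Real.exp (-(∑ k ∈ Finset.Ico m n, a k)) := by
    intro m n
    calc (∏ k ∈ Finset.Ico m n, (1 - a k))
        ≤ ∏ k ∈ Finset.Ico m n, Real.exp (-(a k)) := by
          apply Finset.prod_le_prod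
          · intro k _; linarith [ha1 k]
          · intro k _
            have := Real.add_one_le_exp (-(a k)); linarith
      _ = Real.exp (-(∑ k ∈ Finset.Ico m n, a k)) := by
          rw [← Real.exp_sum]; congr 1; rw [Finset.sum_neg_distrib]
  rw [Metric.tendsto_atTop]
  intro ε hε
  -- choose m with tail sum of r small
  have htail := tendsto_sum_nat_add r
  rw [Metric.tendsto_atTop] at htail
  obtain ⟨m, hm⟩ := htail (ε/2) (by linarith)
  have hm' := hm m le_rfl
  have htail_lt : ∑' k, r (k + m) < ε/2 := by
    have : dist (∑' k, r (k + m)) 0 = ∑' k, r (k + m) := by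
      rw [Real.dist_eq, sub_zero, abs_of_nonneg]
      exact tsum_nonneg fun k => hr _
    rw [this] at hm'; exact hm'
  -- partial tail sums bounded by tsum
  have tail_bound : ∀ n, ∑ k ∈ Finset.Ico m n, r k ≤ ∑' k, r (k + m) := by
    intro n
    rcases le_or_gt m n with h | h
    · rw [Finset.sum_Ico_eq_sum_range]
      simp_rw [add_comm m]
      exact Summable.sum_le_tsum _ (fun k _ => hr _)
        ((summable_nat_add_iff m).mpr hrsum)
    · rw [Finset.Ico_eq_empty (by omega)]
      simp
      exact tsum_nonneg fun k => hr _
  -- exp term tends to 0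
  have hdiv2 : Filter.Tendsto (fun n => ∑ k ∈ Finset.Ico m n, a k)
      Filter.atTop Filter.atTop := by
    have : ∀ᶠ n in Filter.atTop, ∑ k ∈ Finset.Ico m n, a k
        = (∑ k ∈ Finset.range n, a k) - ∑ k ∈ Finset.range m, a k := by
      filter_upwards [Filter.eventually_ge_atTop m] with n hn
      rw [Finset.sum_Ico_eq_sub _ hn]
    have h2 := Filter.tendsto_atTop_add_const_right Filter.atTop
      (-(∑ k ∈ Finset.range m, a k)) hadiv
    refine h2.congr' (this.mono fun n h => ?_)
    show _ = ∑ k ∈ Finset.Ico m n, a k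
    rw [h]; ring
  have hexp : Filter.Tendsto (fun n => Real.exp (-(∑ k ∈ Finset.Ico m n, a k)) * X m)
      Filter.atTop (nhds 0) := by
    have h1 : Filter.Tendsto (fun n => Real.exp (-(∑ k ∈ Finset.Ico m n, a k)))
        Filter.atTop (nhds 0) :=
      Real.tendsto_exp_atBot.comp (Filter.tendsto_neg_atBot_iff.mpr hdiv2)
    simpa using h1.mul_const (X m)
  rw [Metric.tendsto_atTop] at hexp
  obtain ⟨N, hN⟩ := hexp (ε/2) (by linarith)
  refine ⟨max m N, fun n hn => ?_⟩
  have hmn : m ≤ n := le_trans (le_max_left _ _) hn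
  have hNn : N ≤ n := le_trans (le_max_right _ _) hn
  have hNn' := hN n hNn
  have hexp_pos : (0:ℝ) ≤ Real.exp (-(∑ k ∈ Finset.Ico m n, a k)) * X m :=
    mul_nonneg (Real.exp_pos _).le (hX m)
  rw [Real.dist_eq, sub_zero, abs_of_nonneg hexp_pos] at hNn'
  rw [Real.dist_eq, sub_zero, abs_of_nonneg (hX n)]
  have h1 := key m n hmn
  have h2 : (∏ k ∈ Finset.Ico m n, (1 - a k)) * X m
      ≤ Real.exp (-(∑ k ∈ Finset.Ico m n, a k)) * X m :=
    mul_le_mul_of_nonneg_right (prod_le m n) (hX m)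
  have h3 := tail_bound n
  linarith
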